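/- Consider the Hamiltonian system on ℝ^{2n}_x × ℝ^{2n}_y with Hamiltonian H₀(x,y) = H(l(x,y)), where l(x,y) = (x_q - y_p/2, x_p + y_q/2 - A(l_q, r_q)) and r(x,y) = (x_q + y_p/2, x_p - y_q/2 - A(r_q, l_q)) with A the Valatin potential of a closed 2-form F, and symplectic form dy ∧ dx. Then along any solution of Ẋ = ∂H₀/∂y, Ẏ = -∂H₀/∂x with initial data X(0) = x⁰, Y(0) = 0, the quantity r(X(t), Y(t)) is constant in time: r(X(t),Y(t)) = x⁰ for all t. -/

import Mathlib

open MeasureTheory intervalIntegral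

/-- Left groupoid map `l(x,y)` on `T*(T*ℝⁿ)` built from the Valatin potential `A`:
`l_q = x_q - y_p/2`, `l_p = x_p + y_q/2 - A(l_q, r_q)`. -/
noncomputable def lmap {n : ℕ} (A : Fin n → (Fin n → ℝ) → (Fin n → ℝ) → ℝ)
    (x y : (Fin n → ℝ) × (Fin n → ℝ)) : (Fin n → ℝ) × (Fin n → ℝ) :=
  (x.1 - (1/2 : ℝ) • y.2,
    fun j => x.2 j + (1/2) * y.1 j
      - A j (x.1 - (1/2 : ℝ) • y.2) (x.1 + (1/2 : ℝ) • y.2))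

/-- Right groupoid map `r(x,y)` on `T*(T*ℝⁿ)`:
`r_q = x_q + y_p/2`, `r_p = x_p - y_q/2 - A(r_q, l_q)`. -/
noncomputable def rmap {n : ℕ} (A : Fin n → (Fin n → ℝ) → (Fin n → ℝ) → ℝ)
    (x y : (Fin n → ℝ) × (Fin n → ℝ)) : (Fin n → ℝ) × (Fin n → ℝ) :=
  (x.1 + (1/2 : ℝ) • y.2,
    fun j => x.2 j - (1/2) * y.1 j
      - A j (x.1 + (1/2 : ℝ) • y.2) (x.1 - (1/2 : ℝ) • y.2))

section Aux
open Metric Set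
variable {n : ℕ}


lemma hasDerivAt_line {E : Type*} [NormedAddCommGroup E] [NormedSpace ℝ E] (c w : E) (s : ℝ) :
    HasDerivAt (fun s : ℝ => c + s • w) w s := by
  simpa using ((hasDerivAt_id s).smul_const w).const_add c

lemma hasFDerivAt_parametric {E : Type*} [NormedAddCommGroup E] [NormedSpace ℝ E]
    [FiniteDimensional ℝ E] (f : ℝ × E → ℝ) (hf : ContDiff ℝ (⊤ : ℕ∞) f) (x₀ : E) :
    HasFDerivAt (fun x => ∫ t in (0:ℝ)..1, f (t, x))
      (∫ t in (0:ℝ)..1, (fderiv ℝ f (t, x₀)).comp (ContinuousLinearMap.inr ℝ ℝ E)) x₀ := by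
  have hdiff : ∀ (t : ℝ) (x : E), HasFDerivAt (fun x => f (t, x))
      ((fderiv ℝ f (t, x)).comp (ContinuousLinearMap.inr ℝ ℝ E)) x := fun t x =>
    ((hf.differentiable (by simp) (t, x)).hasFDerivAt).comp x (hasFDerivAt_prodMk_right t x)
  have hcont : Continuous fun p : ℝ × E => (fderiv ℝ f p).comp (ContinuousLinearMap.inr ℝ ℝ E) :=
    (hf.continuous_fderiv (by simp)).clm_comp continuous_const
  obtain ⟨M, hM⟩ := ((isCompact_Icc (a := (0:ℝ)) (b := 1)).prod
    (isCompact_closedBall x₀ 1)).exists_bound_of_continuousOn hcont.continuousOn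
  have hIoc : Set.uIoc (0:ℝ) 1 ⊆ Icc 0 1 := by
    rw [uIoc_of_le zero_le_one]; exact Ioc_subset_Icc_self
  exact hasFDerivAt_integral_of_dominated_of_fderiv_le (F := fun x t => f (t, x))
    (F' := fun x t => (fderiv ℝ f (t, x)).comp (ContinuousLinearMap.inr ℝ ℝ E))
    (bound := fun _ => M) (ball_mem_nhds x₀ one_pos)
    (Filter.Eventually.of_forall fun x =>
      (hf.continuous.comp (continuous_id.prodMk continuous_const)).aestronglyMeasurable)
    ((hf.continuous.comp (continuous_id.prodMk continuous_const)).intervalIntegrable _ _)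
    ((hcont.comp (continuous_id.prodMk continuous_const)).aestronglyMeasurable)
    (Filter.Eventually.of_forall fun t ht x hx =>
      hM (t, x) ⟨hIoc ht, ball_subset_closedBall hx⟩)
    intervalIntegrable_const
    (Filter.Eventually.of_forall fun t _ x _ => hdiff t x)


lemma HasFDerivAt.comp_line {E F' : Type*} [NormedAddCommGroup E] [NormedSpace ℝ E]
    [NormedAddCommGroup F'] [NormedSpace ℝ F'] {f : E → F'} {L : E →L[ℝ] F'} {c : E} (w : E)
    (hf : HasFDerivAt f L c) : HasDerivAt (fun s : ℝ => f (c + s • w)) (L w) 0 := by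
  have : HasFDerivAt f L ((fun s : ℝ => c + s • w) 0) := by simpa using hf
  exact this.comp_hasDerivAt 0 (hasDerivAt_line c w 0)

lemma fderiv_eq_lineDeriv {E : Type*} [NormedAddCommGroup E] [NormedSpace ℝ E]
    {f : E → ℝ} {P : E} (hf : DifferentiableAt ℝ f P) (v : E) {d : ℝ}
    (h : HasDerivAt (fun s : ℝ => f (P + s • v)) d 0) : fderiv ℝ f P v = d :=
  (hf.hasFDerivAt.comp_line v).unique h


noncomputable def Phi (F : Fin n → Fin n → (Fin n → ℝ) → ℝ) (j : Fin n)
    (p : ℝ × ((Fin n → ℝ) × (Fin n → ℝ))) : ℝ :=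
  p.1 * ∑ k, F j k (p.2.2 + p.1 • (p.2.1 - p.2.2)) * (p.2.1 k - p.2.2 k)

lemma contDiff_Phi (F : Fin n → Fin n → (Fin n → ℝ) → ℝ)
    (hF : ∀ j k, ContDiff ℝ (⊤ : ℕ∞) (F j k)) (j : Fin n) : ContDiff ℝ (⊤ : ℕ∞) (Phi F j) := by
  have hc : ContDiff ℝ (⊤ : ℕ∞) (fun p : ℝ × ((Fin n → ℝ) × (Fin n → ℝ)) =>
      p.2.2 + p.1 • (p.2.1 - p.2.2)) :=
    (contDiff_snd.snd).add (contDiff_fst.smul (contDiff_snd.fst.sub contDiff_snd.snd))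
  exact contDiff_fst.mul (ContDiff.sum fun k _ =>
    ((hF j k).comp hc).mul (((contDiff_pi.mp contDiff_snd.fst) k).sub
      ((contDiff_pi.mp contDiff_snd.snd) k)))


noncomputable def DA (F : Fin n → Fin n → (Fin n → ℝ) → ℝ) (j : Fin n)
    (p : (Fin n → ℝ) × (Fin n → ℝ)) : ((Fin n → ℝ) × (Fin n → ℝ)) →L[ℝ] ℝ :=
  ∫ t in (0:ℝ)..1, (fderiv ℝ (Phi F j) (t, p)).comp
    (ContinuousLinearMap.inr ℝ ℝ ((Fin n → ℝ) × (Fin n → ℝ)))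

lemma hasFDerivAt_A (F : Fin n → Fin n → (Fin n → ℝ) → ℝ)
    (hF : ∀ j k, ContDiff ℝ (⊤ : ℕ∞) (F j k))
    (A : Fin n → (Fin n → ℝ) → (Fin n → ℝ) → ℝ)
    (hA : ∀ j (q q' : Fin n → ℝ),
      A j q q' = ∫ t in (0:ℝ)..1, t * ∑ k, F j k (q' + t • (q - q')) * (q k - q' k))
    (j : Fin n) (p : (Fin n → ℝ) × (Fin n → ℝ)) :
    HasFDerivAt (fun p : (Fin n → ℝ) × (Fin n → ℝ) => A j p.1 p.2) (DA F j p) p := by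
  have h : (fun p : (Fin n → ℝ) × (Fin n → ℝ) => A j p.1 p.2)
      = fun p => ∫ t in (0:ℝ)..1, Phi F j (t, p) := funext fun p => hA j p.1 p.2
  rw [h]; exact hasFDerivAt_parametric _ (contDiff_Phi F hF j) p

lemma DA_apply (F : Fin n → Fin n → (Fin n → ℝ) → ℝ)
    (hF : ∀ j k, ContDiff ℝ (⊤ : ℕ∞) (F j k)) (j : Fin n)
    (p : (Fin n → ℝ) × (Fin n → ℝ)) (v : (Fin n → ℝ) × (Fin n → ℝ)) :
    DA F j p v = ∫ t in (0:ℝ)..1, fderiv ℝ (Phi F j) (t, p) ((0:ℝ), v) := by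
  rw [DA, ContinuousLinearMap.intervalIntegral_apply]
  · simp
  · exact ((((contDiff_Phi F hF j).continuous_fderiv (by simp)).clm_comp
      continuous_const).comp (continuous_id.prodMk continuous_const)).intervalIntegrable _ _


lemma fderiv_Phi_single (F : Fin n → Fin n → (Fin n → ℝ) → ℝ)
    (hF : ∀ j k, ContDiff ℝ (⊤ : ℕ∞) (F j k)) (j m : Fin n) (t : ℝ) (a b : Fin n → ℝ) :
    fderiv ℝ (Phi F j) (t, (a, b)) ((0:ℝ), ((0 : Fin n → ℝ), Pi.single m 1)) =
      t * ((1 - t) * (∑ k, fderiv ℝ (F j k) (b + t • (a - b)) (Pi.single m 1) * (a k - b k))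
        - F j m (b + t • (a - b))) := by
  set c : Fin n → ℝ := b + t • (a - b) with hc
  set w : Fin n → ℝ := (1 - t) • (Pi.single m 1 : Fin n → ℝ) with hw
  apply fderiv_eq_lineDeriv ((contDiff_Phi F hF j).differentiable (by simp) _)
  have hfun : (fun s : ℝ => Phi F j ((t, (a, b)) + s • ((0:ℝ), ((0 : Fin n → ℝ), (Pi.single m 1 : Fin n → ℝ)))))
      = fun s : ℝ => t * ∑ k, F j k (c + s • w) * ((a k - b k) - s * (Pi.single m 1 : Fin n → ℝ) k) := by
    funext s
    show (t + s * 0) * ∑ k, F j k ((b + s • (Pi.single m 1 : Fin n → ℝ)) + (t + s * 0) •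
        ((a + s • (0 : Fin n → ℝ)) - (b + s • (Pi.single m 1 : Fin n → ℝ)))) *
        ((a + s • (0 : Fin n → ℝ)) k - (b + s • (Pi.single m 1 : Fin n → ℝ)) k) = _
    have h1 : (t + s * 0) = t := by ring
    rw [h1]
    congr 1
    apply Finset.sum_congr rfl
    intro k _
    have harg : (b + s • (Pi.single m 1 : Fin n → ℝ)) + t •
        ((a + s • (0 : Fin n → ℝ)) - (b + s • (Pi.single m 1 : Fin n → ℝ))) = c + s • w := by
      funext i
      simp only [Pi.add_apply, Pi.smul_apply, Pi.sub_apply, Pi.zero_apply, smul_eq_mul, hc, hw]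
      ring
    have hsc : (a + s • (0 : Fin n → ℝ)) k - (b + s • (Pi.single m 1 : Fin n → ℝ)) k
        = (a k - b k) - s * (Pi.single m 1 : Fin n → ℝ) k := by
      simp only [Pi.add_apply, Pi.smul_apply, Pi.zero_apply, smul_eq_mul]
      ring
    rw [harg, hsc]
  rw [hfun]
  have hterm : ∀ k : Fin n, HasDerivAt
      (fun s : ℝ => F j k (c + s • w) * ((a k - b k) - s * (Pi.single m 1 : Fin n → ℝ) k))
      (fderiv ℝ (F j k) c w * (a k - b k) + F j k c * (-((Pi.single m 1 : Fin n → ℝ) k))) 0 := by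
    intro k
    have h1 : HasDerivAt (fun s : ℝ => F j k (c + s • w)) (fderiv ℝ (F j k) c w) 0 :=
      HasFDerivAt.comp_line w ((hF j k).differentiable (by simp) c).hasFDerivAt
    have h2 : HasDerivAt (fun s : ℝ => (a k - b k) - s * (Pi.single m 1 : Fin n → ℝ) k)
        (-((Pi.single m 1 : Fin n → ℝ) k)) 0 := (hasDerivAt_mul_const _).const_sub _
    simpa using h1.fun_mul h2
  have hsum := HasDerivAt.const_mul t (HasDerivAt.fun_sum (fun (k : Fin n) (_ : k ∈ Finset.univ) => hterm k))
  have heq : (t * ∑ k, (fderiv ℝ (F j k) c w * (a k - b k) + F j k c * (-((Pi.single m 1 : Fin n → ℝ) k))))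
      = t * ((1 - t) * (∑ k, fderiv ℝ (F j k) c (Pi.single m 1) * (a k - b k)) - F j m c) := by
    have h2 : ∀ k, fderiv ℝ (F j k) c w = (1 - t) * fderiv ℝ (F j k) c (Pi.single m 1) := by
      intro k; rw [hw, ContinuousLinearMap.map_smul]; simp [smul_eq_mul]
    have h3 : (∑ k, F j k c * (-((Pi.single m 1 : Fin n → ℝ) k))) = - F j m c := by
      simp [Pi.single_apply, mul_ite]
    rw [Finset.sum_add_distrib, h3,
      show (∑ k, fderiv ℝ (F j k) c w * (a k - b k))
        = (1 - t) * ∑ k, fderiv ℝ (F j k) c (Pi.single m 1) * (a k - b k) by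
        rw [Finset.mul_sum]; exact Finset.sum_congr rfl fun k _ => by rw [h2 k]; ring]
    ring
  exact heq ▸ hsum


lemma clm_pi_expand (L : (Fin n → ℝ) →L[ℝ] ℝ) (u : Fin n → ℝ) :
    L u = ∑ k, u k * L (Pi.single k 1) := by
  have hu : u = ∑ k, u k • (Pi.single k 1 : Fin n → ℝ) := by
    funext i
    rw [Finset.sum_apply]
    simp [Pi.single_apply, mul_ite]
  conv_lhs => rw [hu]
  rw [map_sum]
  simp [smul_eq_mul]


lemma key_integral (F : Fin n → Fin n → (Fin n → ℝ) → ℝ)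
    (hF : ∀ j k, ContDiff ℝ (⊤ : ℕ∞) (F j k))
    (hanti : ∀ j k q, F j k q = - F k j q)
    (hclosed : ∀ j k l (q : Fin n → ℝ),
      fderiv ℝ (F k l) q (Pi.single j 1) + fderiv ℝ (F l j) q (Pi.single k 1)
        + fderiv ℝ (F j k) q (Pi.single l 1) = 0)
    (j m : Fin n) (a b : Fin n → ℝ) :
    (∫ t in (0:ℝ)..1, t * ((1-t) * (∑ k, fderiv ℝ (F j k) (b + t • (a-b)) (Pi.single m 1) * (a k - b k)) - F j m (b + t • (a-b))))
    + (∫ t in (0:ℝ)..1, t * ((1-t) * (∑ k, fderiv ℝ (F m k) (a + t • (b-a)) (Pi.single j 1) * (b k - a k)) - F m j (a + t • (b-a)))) = 0 := by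
  have hanti' : ∀ (j k : Fin n) (q v : Fin n → ℝ),
      fderiv ℝ (F j k) q v = -(fderiv ℝ (F k j) q v) := by
    intro j k q v
    have h : F j k = fun q => -(F k j q) := funext fun q => hanti j k q
    rw [h, fderiv_fun_neg]
    simp
  -- continuity helpers
  have hline : ∀ (u v : Fin n → ℝ), Continuous (fun t : ℝ => u + t • v) :=
    fun u v => continuous_const.add (continuous_id.smul continuous_const)
  have hcontD : ∀ (j k : Fin n) (u v w : Fin n → ℝ),
      Continuous (fun t : ℝ => fderiv ℝ (F j k) (u + t • v) w) := fun j k u v w =>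
    ((((hF j k).continuous_fderiv (by simp)).comp (hline u v))).clm_apply continuous_const
  have hcontF : ∀ (j k : Fin n) (u v : Fin n → ℝ),
      Continuous (fun t : ℝ => F j k (u + t • v)) := fun j k u v =>
    (hF j k).continuous.comp (hline u v)
  have hcont1 : Continuous (fun t : ℝ => t * ((1-t) * (∑ k, fderiv ℝ (F j k) (b + t • (a-b)) (Pi.single m 1) * (a k - b k)) - F j m (b + t • (a-b)))) := by
    apply continuous_id.mul
    exact ((continuous_const.sub continuous_id).mul
      (continuous_finset_sum _ fun k _ => (hcontD j k b (a-b) _).mul continuous_const)).sub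
      (hcontF j m b (a-b))
  have hcont2 : Continuous (fun t : ℝ => t * ((1-t) * (∑ k, fderiv ℝ (F m k) (a + t • (b-a)) (Pi.single j 1) * (b k - a k)) - F m j (a + t • (b-a)))) := by
    apply continuous_id.mul
    exact ((continuous_const.sub continuous_id).mul
      (continuous_finset_sum _ fun k _ => (hcontD m k a (b-a) _).mul continuous_const)).sub
      (hcontF m j a (b-a))
  -- substitute t ↦ 1 - t in the second integral
  have hsub := intervalIntegral.integral_comp_sub_left (a := (0:ℝ)) (b := (1:ℝ))
    (fun t : ℝ => t * ((1-t) * (∑ k, fderiv ℝ (F m k) (a + t • (b-a)) (Pi.single j 1) * (b k - a k)) - F m j (a + t • (b-a)))) 1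
  norm_num at hsub
  rw [← hsub]
  have hcont2' : Continuous (fun x : ℝ => (1-x) * (x * ∑ k, fderiv ℝ (F m k) (a + (1-x) • (b-a)) (Pi.single j 1) * (b k - a k) - F m j (a + (1-x) • (b-a)))) := by
    apply (continuous_const.sub continuous_id).mul
    apply Continuous.sub
    · exact continuous_id.mul (continuous_finset_sum _ fun k _ =>
        ((hcontD m k a (b-a) _).comp (continuous_const.sub continuous_id)).mul continuous_const)
    · exact (hcontF m j a (b-a)).comp (continuous_const.sub continuous_id)
  rw [← intervalIntegral.integral_add (hcont1.intervalIntegrable _ _) (hcont2'.intervalIntegrable _ _)]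
  have hψ : ∀ t : ℝ, HasDerivAt (fun t : ℝ => t * (1-t) * F m j (b + t • (a-b)))
      ((1-2*t) * F m j (b + t • (a-b)) + t*(1-t) * fderiv ℝ (F m j) (b + t • (a-b)) (a-b)) t := by
    intro t
    have h_poly : HasDerivAt (fun t : ℝ => t * (1-t)) (1-2*t) t := by
      have h := (hasDerivAt_id t).fun_mul ((hasDerivAt_id t).const_sub 1)
      simp only [id_eq] at h
      exact h.congr_deriv (by ring)
    have h_F : HasDerivAt (fun t : ℝ => F m j (b + t • (a-b)))
        (fderiv ℝ (F m j) (b + t • (a-b)) (a-b)) t :=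
      HasFDerivAt.comp_hasDerivAt t ((hF m j).differentiable (by simp) _).hasFDerivAt
        (hasDerivAt_line b (a-b) t)
    convert h_poly.fun_mul h_F using 1
  have hFTC : (∫ t in (0:ℝ)..1,
      ((1-2*t) * F m j (b + t • (a-b)) + t*(1-t) * fderiv ℝ (F m j) (b + t • (a-b)) (a-b))) = 0 := by
    rw [intervalIntegral.integral_eq_sub_of_hasDerivAt (fun t _ => hψ t)
      ((((continuous_const.sub (continuous_const.mul continuous_id)).mul (hcontF m j b (a-b))).add
        ((continuous_id.mul (continuous_const.sub continuous_id)).mul (hcontD m j b (a-b) (a-b)))).intervalIntegrable _ _)]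
    norm_num
  rw [show (∫ t in (0:ℝ)..1,
      (t * ((1-t) * (∑ k, fderiv ℝ (F j k) (b + t • (a-b)) (Pi.single m 1) * (a k - b k)) - F j m (b + t • (a-b)))
      + (1-t) * (t * ∑ k, fderiv ℝ (F m k) (a + (1-t) • (b-a)) (Pi.single j 1) * (b k - a k) - F m j (a + (1-t) • (b-a)))))
      = ∫ t in (0:ℝ)..1, -(((1-2*t) * F m j (b + t • (a-b)) + t*(1-t) * fderiv ℝ (F m j) (b + t • (a-b)) (a-b))) from ?_]
  · rw [intervalIntegral.integral_neg, hFTC, neg_zero]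
  apply intervalIntegral.integral_congr
  intro t _
  simp only
  have harg : a + (1-t) • (b-a) = b + t • (a-b) := by
    funext i
    simp only [Pi.add_apply, Pi.smul_apply, Pi.sub_apply, smul_eq_mul]
    ring
  rw [harg]
  have hS : (∑ k, fderiv ℝ (F j k) (b + t • (a-b)) (Pi.single m 1) * (a k - b k))
      + (∑ k, fderiv ℝ (F m k) (b + t • (a-b)) (Pi.single j 1) * (b k - a k))
      = -(fderiv ℝ (F m j) (b + t • (a-b)) (a-b)) := by
    rw [clm_pi_expand (fderiv ℝ (F m j) (b + t • (a-b))) (a-b), ← Finset.sum_add_distrib,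
      ← Finset.sum_neg_distrib]
    apply Finset.sum_congr rfl
    intro k _
    have h1 := hclosed m j k (b + t • (a-b))
    have h2 := hanti' k m (b + t • (a-b)) (Pi.single j 1)
    have h3 : (a - b) k = a k - b k := rfl
    rw [h3]
    linear_combination (a k - b k) * h1 - (a k - b k) * h2
  linear_combination (t*(1-t)) * hS + (-t) * (hanti j m (b + t • (a-b)))


lemma hasDerivAt_H_curve (A : Fin n → (Fin n → ℝ) → (Fin n → ℝ) → ℝ)
    (DA' : Fin n → ((Fin n → ℝ) × (Fin n → ℝ)) → (((Fin n → ℝ) × (Fin n → ℝ)) →L[ℝ] ℝ))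
    (hAd : ∀ j p, HasFDerivAt (fun p : (Fin n → ℝ) × (Fin n → ℝ) => A j p.1 p.2) (DA' j p) p)
    (H : (Fin n → ℝ) × (Fin n → ℝ) → ℝ) (hH : ContDiff ℝ (⊤ : ℕ∞) H)
    (p1 p2 C u1 u2 w2 : Fin n → ℝ) :
    HasDerivAt (fun s : ℝ => H ((p1 + s • u1 : Fin n → ℝ),
        fun k => C k + s * w2 k - A k (p1 + s • u1) (p2 + s • u2)))
      (fderiv ℝ H ((p1 : Fin n → ℝ), fun k => C k - A k p1 p2)
        ((u1 : Fin n → ℝ), fun k => w2 k - DA' k (p1, p2) (u1, u2))) 0 := by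
  have hγ : HasDerivAt (fun s : ℝ => (((p1 + s • u1 : Fin n → ℝ),
      fun k => C k + s * w2 k - A k (p1 + s • u1) (p2 + s • u2)) :
        (Fin n → ℝ) × (Fin n → ℝ)))
      ((u1, fun k => w2 k - DA' k (p1, p2) (u1, u2))) 0 := by
    apply HasDerivAt.prodMk
    · exact hasDerivAt_line p1 u1 0
    · rw [hasDerivAt_pi]
      intro k
      have hAk : HasDerivAt (fun s : ℝ => A k (p1 + s • u1) (p2 + s • u2))
          (DA' k (p1, p2) (u1, u2)) 0 := HasFDerivAt.comp_line (u1, u2) (hAd k (p1, p2))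
      have hlin : HasDerivAt (fun s : ℝ => C k + s * w2 k) (w2 k) 0 := by
        simpa using (hasDerivAt_mul_const (w2 k)).const_add (C k)
      exact hlin.sub hAk
  have hγ0 : (((p1 + (0:ℝ) • u1 : Fin n → ℝ),
      fun k => C k + (0:ℝ) * w2 k - A k (p1 + (0:ℝ) • u1) (p2 + (0:ℝ) • u2)) :
        (Fin n → ℝ) × (Fin n → ℝ))
      = ((p1 : Fin n → ℝ), fun k => C k - A k p1 p2) := by
    simp
  have hfd : HasFDerivAt H (fderiv ℝ H ((p1 : Fin n → ℝ), fun k => C k - A k p1 p2))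
      (((p1 + (0:ℝ) • u1 : Fin n → ℝ),
      fun k => C k + (0:ℝ) * w2 k - A k (p1 + (0:ℝ) • u1) (p2 + (0:ℝ) • u2))) := by
    rw [hγ0]
    exact (hH.differentiable (by simp) _).hasFDerivAt
  exact hfd.comp_hasDerivAt 0 hγ


lemma fder_yq (A : Fin n → (Fin n → ℝ) → (Fin n → ℝ) → ℝ)
    (DA' : Fin n → ((Fin n → ℝ) × (Fin n → ℝ)) → (((Fin n → ℝ) × (Fin n → ℝ)) →L[ℝ] ℝ))
    (hAd : ∀ j p, HasFDerivAt (fun p : (Fin n → ℝ) × (Fin n → ℝ) => A j p.1 p.2) (DA' j p) p)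
    (H : (Fin n → ℝ) × (Fin n → ℝ) → ℝ) (hH : ContDiff ℝ (⊤ : ℕ∞) H)
    (x y : (Fin n → ℝ) × (Fin n → ℝ)) (j : Fin n)
    (hdiff : DifferentiableAt ℝ (fun y => H (lmap A x y)) y) :
    fderiv ℝ (fun y => H (lmap A x y)) y ((Pi.single j 1 : Fin n → ℝ), (0 : Fin n → ℝ))
      = (1/2) * fderiv ℝ H (lmap A x y) ((0 : Fin n → ℝ), (Pi.single j 1 : Fin n → ℝ)) := by
  apply fderiv_eq_lineDeriv hdiff
  have hfun : (fun s : ℝ => H (lmap A x (y + s • ((Pi.single j 1 : Fin n → ℝ), (0 : Fin n → ℝ)))))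
      = fun s : ℝ => H (((x.1 - (1/2:ℝ) • y.2) + s • (0 : Fin n → ℝ),
        fun k => (x.2 k + (1/2) * y.1 k) + s * ((1/2:ℝ) • (Pi.single j 1 : Fin n → ℝ)) k
          - A k ((x.1 - (1/2:ℝ) • y.2) + s • (0 : Fin n → ℝ))
              ((x.1 + (1/2:ℝ) • y.2) + s • (0 : Fin n → ℝ)))) := by
    funext s
    apply congrArg H
    refine Prod.ext ?_ ?_
    · show x.1 - (1/2:ℝ) • (y.2 + s • (0 : Fin n → ℝ)) = _
      funext i
      simp only [Pi.add_apply, Pi.sub_apply, Pi.smul_apply, Pi.zero_apply, smul_eq_mul]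
      ring
    · funext k
      show x.2 k + (1/2) * (y.1 k + s * (Pi.single j 1 : Fin n → ℝ) k)
          - A k (x.1 - (1/2:ℝ) • (y.2 + s • (0 : Fin n → ℝ)))
              (x.1 + (1/2:ℝ) • (y.2 + s • (0 : Fin n → ℝ))) = _
      have h1 : x.1 - (1/2:ℝ) • (y.2 + s • (0 : Fin n → ℝ))
          = (x.1 - (1/2:ℝ) • y.2) + s • (0 : Fin n → ℝ) := by
        funext i
        simp only [Pi.add_apply, Pi.sub_apply, Pi.smul_apply, Pi.zero_apply, smul_eq_mul]; ring
      have h2 : x.1 + (1/2:ℝ) • (y.2 + s • (0 : Fin n → ℝ))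
          = (x.1 + (1/2:ℝ) • y.2) + s • (0 : Fin n → ℝ) := by
        funext i
        simp only [Pi.add_apply, Pi.smul_apply, Pi.zero_apply, smul_eq_mul]; ring
      rw [h1, h2]
      simp only [Pi.smul_apply, smul_eq_mul]
      ring
  rw [hfun]
  have h := hasDerivAt_H_curve A DA' hAd H hH (x.1 - (1/2:ℝ) • y.2) (x.1 + (1/2:ℝ) • y.2)
    (fun k => x.2 k + (1/2) * y.1 k) 0 0 ((1/2:ℝ) • (Pi.single j 1 : Fin n → ℝ))
  convert h using 1
  show (1/2) * fderiv ℝ H (lmap A x y) ((0 : Fin n → ℝ), (Pi.single j 1 : Fin n → ℝ))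
    = fderiv ℝ H (lmap A x y) _
  rw [show (((0 : Fin n → ℝ), fun k => ((1/2:ℝ) • (Pi.single j 1 : Fin n → ℝ)) k
      - DA' k (x.1 - (1/2:ℝ) • y.2, x.1 + (1/2:ℝ) • y.2) ((0 : Fin n → ℝ), (0 : Fin n → ℝ))) :
        (Fin n → ℝ) × (Fin n → ℝ))
      = (1/2:ℝ) • (((0 : Fin n → ℝ), (Pi.single j 1 : Fin n → ℝ)) : (Fin n → ℝ) × (Fin n → ℝ)) from ?_]
  · rw [ContinuousLinearMap.map_smul, smul_eq_mul]
  · refine Prod.ext (by simp) ?_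
    funext k
    have : ∀ p, DA' k p ((0 : Fin n → ℝ), (0 : Fin n → ℝ)) = 0 :=
      fun p => map_zero _
    simp [this]

lemma fder_xp (A : Fin n → (Fin n → ℝ) → (Fin n → ℝ) → ℝ)
    (DA' : Fin n → ((Fin n → ℝ) × (Fin n → ℝ)) → (((Fin n → ℝ) × (Fin n → ℝ)) →L[ℝ] ℝ))
    (hAd : ∀ j p, HasFDerivAt (fun p : (Fin n → ℝ) × (Fin n → ℝ) => A j p.1 p.2) (DA' j p) p)
    (H : (Fin n → ℝ) × (Fin n → ℝ) → ℝ) (hH : ContDiff ℝ (⊤ : ℕ∞) H)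
    (x y : (Fin n → ℝ) × (Fin n → ℝ)) (j : Fin n)
    (hdiff : DifferentiableAt ℝ (fun x => H (lmap A x y)) x) :
    fderiv ℝ (fun x => H (lmap A x y)) x ((0 : Fin n → ℝ), (Pi.single j 1 : Fin n → ℝ))
      = fderiv ℝ H (lmap A x y) ((0 : Fin n → ℝ), (Pi.single j 1 : Fin n → ℝ)) := by
  apply fderiv_eq_lineDeriv hdiff
  have hfun : (fun s : ℝ => H (lmap A (x + s • ((0 : Fin n → ℝ), (Pi.single j 1 : Fin n → ℝ))) y))
      = fun s : ℝ => H (((x.1 - (1/2:ℝ) • y.2) + s • (0 : Fin n → ℝ),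
        fun k => (x.2 k + (1/2) * y.1 k) + s * (Pi.single j 1 : Fin n → ℝ) k
          - A k ((x.1 - (1/2:ℝ) • y.2) + s • (0 : Fin n → ℝ))
              ((x.1 + (1/2:ℝ) • y.2) + s • (0 : Fin n → ℝ)))) := by
    funext s
    apply congrArg H
    have h1 : (x + s • ((0 : Fin n → ℝ), (Pi.single j 1 : Fin n → ℝ))).1 - (1/2:ℝ) • y.2
        = (x.1 - (1/2:ℝ) • y.2) + s • (0 : Fin n → ℝ) := by
      funext i
      simp only [Prod.fst_add, Prod.smul_fst, Pi.add_apply, Pi.sub_apply, Pi.smul_apply,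
        Pi.zero_apply, smul_eq_mul]
      ring
    have h2 : (x + s • ((0 : Fin n → ℝ), (Pi.single j 1 : Fin n → ℝ))).1 + (1/2:ℝ) • y.2
        = (x.1 + (1/2:ℝ) • y.2) + s • (0 : Fin n → ℝ) := by
      funext i
      simp only [Prod.fst_add, Prod.smul_fst, Pi.add_apply, Pi.smul_apply,
        Pi.zero_apply, smul_eq_mul]
      ring
    refine Prod.ext ?_ ?_
    · exact h1
    · funext k
      show (x + s • ((0 : Fin n → ℝ), (Pi.single j 1 : Fin n → ℝ))).2 k + (1/2) * y.1 k
          - A k _ _ = _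
      rw [h1, h2]
      simp only [Prod.snd_add, Prod.smul_snd, Pi.add_apply, Pi.smul_apply, smul_eq_mul]
      ring
  rw [hfun]
  have h := hasDerivAt_H_curve A DA' hAd H hH (x.1 - (1/2:ℝ) • y.2) (x.1 + (1/2:ℝ) • y.2)
    (fun k => x.2 k + (1/2) * y.1 k) 0 0 (Pi.single j 1 : Fin n → ℝ)
  convert h using 1
  show fderiv ℝ H (lmap A x y) ((0 : Fin n → ℝ), (Pi.single j 1 : Fin n → ℝ))
    = fderiv ℝ H (lmap A x y) _
  congr 1
  refine Prod.ext (by simp) ?_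
  funext k
  have hz : ∀ p, DA' k p ((0 : Fin n → ℝ), (0 : Fin n → ℝ)) = 0 :=
    fun p => map_zero _
  simp [hz]

lemma fder_yp (A : Fin n → (Fin n → ℝ) → (Fin n → ℝ) → ℝ)
    (DA' : Fin n → ((Fin n → ℝ) × (Fin n → ℝ)) → (((Fin n → ℝ) × (Fin n → ℝ)) →L[ℝ] ℝ))
    (hAd : ∀ j p, HasFDerivAt (fun p : (Fin n → ℝ) × (Fin n → ℝ) => A j p.1 p.2) (DA' j p) p)
    (H : (Fin n → ℝ) × (Fin n → ℝ) → ℝ) (hH : ContDiff ℝ (⊤ : ℕ∞) H)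
    (x y : (Fin n → ℝ) × (Fin n → ℝ)) (j : Fin n)
    (hdiff : DifferentiableAt ℝ (fun y => H (lmap A x y)) y) :
    fderiv ℝ (fun y => H (lmap A x y)) y ((0 : Fin n → ℝ), (Pi.single j 1 : Fin n → ℝ))
      = fderiv ℝ H (lmap A x y) (-((1/2:ℝ) • (Pi.single j 1 : Fin n → ℝ)),
          fun k => -(DA' k (x.1 - (1/2:ℝ) • y.2, x.1 + (1/2:ℝ) • y.2)
            (-((1/2:ℝ) • (Pi.single j 1 : Fin n → ℝ)), (1/2:ℝ) • (Pi.single j 1 : Fin n → ℝ)))) := by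
  apply fderiv_eq_lineDeriv hdiff
  have hfun : (fun s : ℝ => H (lmap A x (y + s • ((0 : Fin n → ℝ), (Pi.single j 1 : Fin n → ℝ)))))
      = fun s : ℝ => H (((x.1 - (1/2:ℝ) • y.2) + s • (-((1/2:ℝ) • (Pi.single j 1 : Fin n → ℝ))),
        fun k => (x.2 k + (1/2) * y.1 k) + s * (0 : Fin n → ℝ) k
          - A k ((x.1 - (1/2:ℝ) • y.2) + s • (-((1/2:ℝ) • (Pi.single j 1 : Fin n → ℝ))))
              ((x.1 + (1/2:ℝ) • y.2) + s • ((1/2:ℝ) • (Pi.single j 1 : Fin n → ℝ)))) ) := by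
    funext s
    apply congrArg H
    have h1 : x.1 - (1/2:ℝ) • (y.2 + s • (Pi.single j 1 : Fin n → ℝ))
        = (x.1 - (1/2:ℝ) • y.2) + s • (-((1/2:ℝ) • (Pi.single j 1 : Fin n → ℝ))) := by
      funext i
      simp only [Pi.add_apply, Pi.sub_apply, Pi.smul_apply, Pi.neg_apply, smul_eq_mul]
      ring
    have h2 : x.1 + (1/2:ℝ) • (y.2 + s • (Pi.single j 1 : Fin n → ℝ))
        = (x.1 + (1/2:ℝ) • y.2) + s • ((1/2:ℝ) • (Pi.single j 1 : Fin n → ℝ)) := by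
      funext i
      simp only [Pi.add_apply, Pi.smul_apply, smul_eq_mul]
      ring
    refine Prod.ext h1 ?_
    funext k
    show x.2 k + (1/2) * (y.1 k + s * (0 : Fin n → ℝ) k)
        - A k (x.1 - (1/2:ℝ) • (y.2 + s • (Pi.single j 1 : Fin n → ℝ)))
            (x.1 + (1/2:ℝ) • (y.2 + s • (Pi.single j 1 : Fin n → ℝ))) = _
    rw [h1, h2]
    simp only [Pi.zero_apply]
    ring
  rw [hfun]
  have h := hasDerivAt_H_curve A DA' hAd H hH (x.1 - (1/2:ℝ) • y.2) (x.1 + (1/2:ℝ) • y.2)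
    (fun k => x.2 k + (1/2) * y.1 k) (-((1/2:ℝ) • (Pi.single j 1 : Fin n → ℝ)))
    ((1/2:ℝ) • (Pi.single j 1 : Fin n → ℝ)) 0
  convert h using 1
  show fderiv ℝ H (lmap A x y) _ = fderiv ℝ H (lmap A x y) _
  congr 1
  refine Prod.ext rfl ?_
  funext k
  simp

lemma fder_xq (A : Fin n → (Fin n → ℝ) → (Fin n → ℝ) → ℝ)
    (DA' : Fin n → ((Fin n → ℝ) × (Fin n → ℝ)) → (((Fin n → ℝ) × (Fin n → ℝ)) →L[ℝ] ℝ))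
    (hAd : ∀ j p, HasFDerivAt (fun p : (Fin n → ℝ) × (Fin n → ℝ) => A j p.1 p.2) (DA' j p) p)
    (H : (Fin n → ℝ) × (Fin n → ℝ) → ℝ) (hH : ContDiff ℝ (⊤ : ℕ∞) H)
    (x y : (Fin n → ℝ) × (Fin n → ℝ)) (j : Fin n)
    (hdiff : DifferentiableAt ℝ (fun x => H (lmap A x y)) x) :
    fderiv ℝ (fun x => H (lmap A x y)) x ((Pi.single j 1 : Fin n → ℝ), (0 : Fin n → ℝ))
      = fderiv ℝ H (lmap A x y) ((Pi.single j 1 : Fin n → ℝ),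
          fun k => -(DA' k (x.1 - (1/2:ℝ) • y.2, x.1 + (1/2:ℝ) • y.2)
            ((Pi.single j 1 : Fin n → ℝ), (Pi.single j 1 : Fin n → ℝ)))) := by
  apply fderiv_eq_lineDeriv hdiff
  have hfun : (fun s : ℝ => H (lmap A (x + s • ((Pi.single j 1 : Fin n → ℝ), (0 : Fin n → ℝ))) y))
      = fun s : ℝ => H (((x.1 - (1/2:ℝ) • y.2) + s • (Pi.single j 1 : Fin n → ℝ),
        fun k => (x.2 k + (1/2) * y.1 k) + s * (0 : Fin n → ℝ) k
          - A k ((x.1 - (1/2:ℝ) • y.2) + s • (Pi.single j 1 : Fin n → ℝ))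
              ((x.1 + (1/2:ℝ) • y.2) + s • (Pi.single j 1 : Fin n → ℝ)))) := by
    funext s
    apply congrArg H
    have h1 : (x + s • ((Pi.single j 1 : Fin n → ℝ), (0 : Fin n → ℝ))).1 - (1/2:ℝ) • y.2
        = (x.1 - (1/2:ℝ) • y.2) + s • (Pi.single j 1 : Fin n → ℝ) := by
      funext i
      simp only [Prod.fst_add, Prod.smul_fst, Pi.add_apply, Pi.sub_apply, Pi.smul_apply,
        smul_eq_mul]
      ring
    have h2 : (x + s • ((Pi.single j 1 : Fin n → ℝ), (0 : Fin n → ℝ))).1 + (1/2:ℝ) • y.2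
        = (x.1 + (1/2:ℝ) • y.2) + s • (Pi.single j 1 : Fin n → ℝ) := by
      funext i
      simp only [Prod.fst_add, Prod.smul_fst, Pi.add_apply, Pi.smul_apply, smul_eq_mul]
      ring
    refine Prod.ext h1 ?_
    funext k
    show (x + s • ((Pi.single j 1 : Fin n → ℝ), (0 : Fin n → ℝ))).2 k + (1/2) * y.1 k
        - A k _ _ = _
    rw [h1, h2]
    simp only [Prod.snd_add, Prod.smul_snd, Pi.add_apply, Pi.smul_apply, Pi.zero_apply,
      smul_eq_mul]
    ring
  rw [hfun]
  have h := hasDerivAt_H_curve A DA' hAd H hH (x.1 - (1/2:ℝ) • y.2) (x.1 + (1/2:ℝ) • y.2)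
    (fun k => x.2 k + (1/2) * y.1 k) (Pi.single j 1 : Fin n → ℝ) (Pi.single j 1 : Fin n → ℝ) 0
  convert h using 1
  show fderiv ℝ H (lmap A x y) _ = fderiv ℝ H (lmap A x y) _
  congr 1
  refine Prod.ext rfl ?_
  funext k
  simp

lemma clm_pi_expand2 (L : ((Fin n → ℝ) × (Fin n → ℝ)) →L[ℝ] ℝ) (u : Fin n → ℝ) :
    L ((0 : Fin n → ℝ), u) = ∑ k, u k * L ((0 : Fin n → ℝ), (Pi.single k 1 : Fin n → ℝ)) := by
  have hu : (((0 : Fin n → ℝ), u) : (Fin n → ℝ) × (Fin n → ℝ))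
      = ∑ k, u k • (((0 : Fin n → ℝ), (Pi.single k 1 : Fin n → ℝ)) :
          (Fin n → ℝ) × (Fin n → ℝ)) := by
    refine Prod.ext ?_ ?_
    · rw [Prod.fst_sum]; simp
    · rw [Prod.snd_sum]
      simp only [Prod.smul_snd]
      funext i
      rw [Finset.sum_apply]
      simp [Pi.single_apply, mul_ite]
  conv_lhs => rw [hu]
  rw [map_sum]
  exact Finset.sum_congr rfl fun k _ => by rw [ContinuousLinearMap.map_smul, smul_eq_mul]

lemma diff_H_lmap_y (A : Fin n → (Fin n → ℝ) → (Fin n → ℝ) → ℝ)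
    (hA2 : ∀ j, Differentiable ℝ (fun p : (Fin n → ℝ) × (Fin n → ℝ) => A j p.1 p.2))
    (H : (Fin n → ℝ) × (Fin n → ℝ) → ℝ) (hH : ContDiff ℝ (⊤ : ℕ∞) H)
    (x : (Fin n → ℝ) × (Fin n → ℝ)) :
    Differentiable ℝ (fun y : (Fin n → ℝ) × (Fin n → ℝ) => H (lmap A x y)) := by
  apply (hH.differentiable (by simp)).comp
  show Differentiable ℝ (fun y : (Fin n → ℝ) × (Fin n → ℝ) =>
    ((x.1 - (1/2:ℝ) • y.2, fun j => x.2 j + (1/2) * y.1 j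
      - A j (x.1 - (1/2:ℝ) • y.2) (x.1 + (1/2:ℝ) • y.2)) : (Fin n → ℝ) × (Fin n → ℝ)))
  have c1 : Differentiable ℝ (fun y : (Fin n → ℝ) × (Fin n → ℝ) => x.1 - (1/2:ℝ) • y.2) :=
    (differentiable_const x.1).sub (differentiable_snd.const_smul (1/2:ℝ))
  have c2 : Differentiable ℝ (fun y : (Fin n → ℝ) × (Fin n → ℝ) => x.1 + (1/2:ℝ) • y.2) :=
    (differentiable_const x.1).add (differentiable_snd.const_smul (1/2:ℝ))
  refine Differentiable.prodMk c1 ?_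
  rw [differentiable_pi]
  intro j
  refine Differentiable.sub ?_ ((hA2 j).comp (c1.prodMk c2))
  exact (differentiable_const _).add ((differentiable_pi.mp differentiable_fst j).const_mul _)

lemma diff_H_lmap_x (A : Fin n → (Fin n → ℝ) → (Fin n → ℝ) → ℝ)
    (hA2 : ∀ j, Differentiable ℝ (fun p : (Fin n → ℝ) × (Fin n → ℝ) => A j p.1 p.2))
    (H : (Fin n → ℝ) × (Fin n → ℝ) → ℝ) (hH : ContDiff ℝ (⊤ : ℕ∞) H)
    (y : (Fin n → ℝ) × (Fin n → ℝ)) :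
    Differentiable ℝ (fun x : (Fin n → ℝ) × (Fin n → ℝ) => H (lmap A x y)) := by
  apply (hH.differentiable (by simp)).comp
  show Differentiable ℝ (fun x : (Fin n → ℝ) × (Fin n → ℝ) =>
    ((x.1 - (1/2:ℝ) • y.2, fun j => x.2 j + (1/2) * y.1 j
      - A j (x.1 - (1/2:ℝ) • y.2) (x.1 + (1/2:ℝ) • y.2)) : (Fin n → ℝ) × (Fin n → ℝ)))
  have c1 : Differentiable ℝ (fun x : (Fin n → ℝ) × (Fin n → ℝ) => x.1 - (1/2:ℝ) • y.2) :=
    differentiable_fst.sub (differentiable_const _)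
  have c2 : Differentiable ℝ (fun x : (Fin n → ℝ) × (Fin n → ℝ) => x.1 + (1/2:ℝ) • y.2) :=
    differentiable_fst.add (differentiable_const _)
  refine Differentiable.prodMk c1 ?_
  rw [differentiable_pi]
  intro j
  refine Differentiable.sub ?_ ((hA2 j).comp (c1.prodMk c2))
  exact (differentiable_pi.mp (differentiable_snd (𝕜 := ℝ) (E := Fin n → ℝ) (F := Fin n → ℝ)) j).add (differentiable_const _)

lemma eq_init_of_hasDerivAt_zero {f : ℝ → ℝ} (h : ∀ t, HasDerivAt f 0 t) (t : ℝ) :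
    f t = f 0 :=
  is_const_of_deriv_eq_zero (fun s => (h s).differentiableAt) (fun s => (h s).deriv) t 0

lemma key_DA (F : Fin n → Fin n → (Fin n → ℝ) → ℝ)
    (hF : ∀ j k, ContDiff ℝ (⊤ : ℕ∞) (F j k))
    (hanti : ∀ j k q, F j k q = - F k j q)
    (hclosed : ∀ j k l (q : Fin n → ℝ),
      fderiv ℝ (F k l) q (Pi.single j 1) + fderiv ℝ (F l j) q (Pi.single k 1)
        + fderiv ℝ (F j k) q (Pi.single l 1) = 0)
    (j m : Fin n) (a b : Fin n → ℝ) :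
    DA F j (a, b) ((0 : Fin n → ℝ), (Pi.single m 1 : Fin n → ℝ))
      + DA F m (b, a) ((0 : Fin n → ℝ), (Pi.single j 1 : Fin n → ℝ)) = 0 := by
  rw [DA_apply F hF j (a,b), DA_apply F hF m (b,a),
    intervalIntegral.integral_congr (g := fun t : ℝ => t * ((1-t) *
      (∑ k, fderiv ℝ (F j k) (b + t • (a-b)) (Pi.single m 1) * (a k - b k))
      - F j m (b + t • (a-b)))) (fun t _ => fderiv_Phi_single F hF j m t a b),
    intervalIntegral.integral_congr (g := fun t : ℝ => t * ((1-t) *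
      (∑ k, fderiv ℝ (F m k) (a + t • (b-a)) (Pi.single j 1) * (b k - a k))
      - F m j (a + t • (b-a)))) (fun t _ => fderiv_Phi_single F hF m j t b a)]
  exact key_integral F hF hanti hclosed j m a b

lemma Aqq (F : Fin n → Fin n → (Fin n → ℝ) → ℝ)
    (A : Fin n → (Fin n → ℝ) → (Fin n → ℝ) → ℝ)
    (hA : ∀ j (q q' : Fin n → ℝ),
      A j q q' = ∫ t in (0:ℝ)..1, t * ∑ k, F j k (q' + t • (q - q')) * (q k - q' k))
    (j : Fin n) (q : Fin n → ℝ) : A j q q = 0 := by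
  rw [hA]
  simp

end Aux

/-- Along any solution of the Hamiltonian system with Hamiltonian
`H₀(x,y) = H(l(x,y))` (symplectic form `dy ∧ dx`) starting at `X(0) = x⁰, Y(0) = 0`,
the right groupoid map `r(X(t),Y(t))` is a conserved quantity, equal to `x⁰`. -/
theorem rmap_is_integral_of_motion {n : ℕ}
    (F : Fin n → Fin n → (Fin n → ℝ) → ℝ)
    (hF : ∀ j k, ContDiff ℝ (⊤ : ℕ∞) (F j k))
    (hanti : ∀ j k q, F j k q = - F k j q)
    (hclosed : ∀ j k l (q : Fin n → ℝ),
      fderiv ℝ (F k l) q (Pi.single j 1) + fderiv ℝ (F l j) q (Pi.single k 1)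
        + fderiv ℝ (F j k) q (Pi.single l 1) = 0)
    (A : Fin n → (Fin n → ℝ) → (Fin n → ℝ) → ℝ)
    (hA : ∀ j (q q' : Fin n → ℝ),
      A j q q' = ∫ t in (0:ℝ)..1, t * ∑ k, F j k (q' + t • (q - q')) * (q k - q' k))
    (H : (Fin n → ℝ) × (Fin n → ℝ) → ℝ) (hH : ContDiff ℝ (⊤ : ℕ∞) H)
    (X Y : ℝ → (Fin n → ℝ) × (Fin n → ℝ)) (x0 : (Fin n → ℝ) × (Fin n → ℝ))
    (hX0 : X 0 = x0) (hY0 : Y 0 = 0)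
    (hXq : ∀ (t : ℝ) (j : Fin n), HasDerivAt (fun s => (X s).1 j)
      (fderiv ℝ (fun y => H (lmap A (X t) y)) (Y t) (Pi.single j 1, 0)) t)
    (hXp : ∀ (t : ℝ) (j : Fin n), HasDerivAt (fun s => (X s).2 j)
      (fderiv ℝ (fun y => H (lmap A (X t) y)) (Y t) (0, Pi.single j 1)) t)
    (hYq : ∀ (t : ℝ) (j : Fin n), HasDerivAt (fun s => (Y s).1 j)
      (-(fderiv ℝ (fun x => H (lmap A x (Y t))) (X t) (Pi.single j 1, 0))) t)
    (hYp : ∀ (t : ℝ) (j : Fin n), HasDerivAt (fun s => (Y s).2 j)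
      (-(fderiv ℝ (fun x => H (lmap A x (Y t))) (X t) (0, Pi.single j 1))) t) :
    ∀ t : ℝ, rmap A (X t) (Y t) = x0 := by
  have hAd : ∀ (j : Fin n) (p : (Fin n → ℝ) × (Fin n → ℝ)),
      HasFDerivAt (fun p : (Fin n → ℝ) × (Fin n → ℝ) => A j p.1 p.2) (DA F j p) p :=
    fun j p => hasFDerivAt_A F hF A hA j p
  have hA2 : ∀ j, Differentiable ℝ (fun p : (Fin n → ℝ) × (Fin n → ℝ) => A j p.1 p.2) :=
    fun j p => (hAd j p).differentiableAt
  have hdy : ∀ x, Differentiable ℝ (fun y : (Fin n → ℝ) × (Fin n → ℝ) => H (lmap A x y)) :=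
    diff_H_lmap_y A hA2 H hH
  have hdx : ∀ y, Differentiable ℝ (fun x : (Fin n → ℝ) × (Fin n → ℝ) => H (lmap A x y)) :=
    diff_H_lmap_x A hA2 H hH
  -- Part 1 : the q-component of rmap is conserved
  have hu : ∀ (j : Fin n) (t : ℝ), (X t).1 j + (1/2) * (Y t).2 j = x0.1 j := by
    intro j t
    have hder : ∀ s : ℝ, HasDerivAt (fun s => (X s).1 j + (1/2) * (Y s).2 j) 0 s := by
      intro s
      have h1 := (hXq s j).add ((hYp s j).const_mul (1/2))
      refine h1.congr_deriv (Eq.symm ?_)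
      rw [fder_yq A (DA F) hAd H hH (X s) (Y s) j (hdy (X s) (Y s)),
        fder_xp A (DA F) hAd H hH (X s) (Y s) j (hdx (Y s) (X s))]
      ring
    have hc := eq_init_of_hasDerivAt_zero hder t
    rw [hc, hX0, hY0]
    simp
  have hrq : ∀ t : ℝ, (X t).1 + (1/2:ℝ) • (Y t).2 = x0.1 := by
    intro t
    funext i
    have := hu i t
    simpa [smul_eq_mul] using this
  -- Part 2 : the p-component
  have hw : ∀ (j : Fin n) (t : ℝ),
      (X t).2 j - (1/2) * (Y t).1 j - A j x0.1 ((X t).1 - (1/2:ℝ) • (Y t).2)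
        = x0.2 j - A j x0.1 x0.1 := by
    intro j t
    have hder : ∀ s : ℝ, HasDerivAt
        (fun s => (X s).2 j - (1/2) * (Y s).1 j - A j x0.1 ((X s).1 - (1/2:ℝ) • (Y s).2)) 0 s := by
      intro s
      -- derivative of the l_q-curve
      have hlq : HasDerivAt (fun r => ((X r).1 - (1/2:ℝ) • (Y r).2 : Fin n → ℝ))
          (fun k => fderiv ℝ H (lmap A (X s) (Y s)) ((0 : Fin n → ℝ), (Pi.single k 1 : Fin n → ℝ))) s := by
        rw [hasDerivAt_pi]
        intro i
        have h := (hXq s i).sub ((hYp s i).const_mul (1/2))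
        have h2 : HasDerivAt (fun r => (X r).1 i - (1/2) * (Y r).2 i)
            (fderiv ℝ H (lmap A (X s) (Y s)) ((0 : Fin n → ℝ), (Pi.single i 1 : Fin n → ℝ))) s := by
          refine h.congr_deriv (Eq.symm ?_)
          rw [fder_yq A (DA F) hAd H hH (X s) (Y s) i (hdy (X s) (Y s)),
            fder_xp A (DA F) hAd H hH (X s) (Y s) i (hdx (Y s) (X s))]
          ring
        exact h2
      have hAterm : HasDerivAt (fun r => A j x0.1 ((X r).1 - (1/2:ℝ) • (Y r).2))
          (DA F j (x0.1, (X s).1 - (1/2:ℝ) • (Y s).2) ((0 : Fin n → ℝ),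
            fun k => fderiv ℝ H (lmap A (X s) (Y s)) ((0 : Fin n → ℝ), (Pi.single k 1 : Fin n → ℝ)))) s := by
        have hcurve : HasDerivAt
            (fun r => ((x0.1, (X r).1 - (1/2:ℝ) • (Y r).2) : (Fin n → ℝ) × (Fin n → ℝ)))
            (((0 : Fin n → ℝ), fun k => fderiv ℝ H (lmap A (X s) (Y s))
              ((0 : Fin n → ℝ), (Pi.single k 1 : Fin n → ℝ)))) s :=
          (hasDerivAt_const s x0.1).prodMk hlq
        exact (hAd j _).comp_hasDerivAt s hcurve
      have h := ((hXp s j).sub ((hYq s j).const_mul (1/2))).sub hAterm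
      refine h.congr_deriv (Eq.symm ?_)
      rw [fder_yp A (DA F) hAd H hH (X s) (Y s) j (hdy (X s) (Y s)),
        fder_xq A (DA F) hAd H hH (X s) (Y s) j (hdx (Y s) (X s)),
        ← hrq s]
      -- abbreviations
      set lq : Fin n → ℝ := (X s).1 - (1/2:ℝ) • (Y s).2 with hlqdef
      set rq : Fin n → ℝ := (X s).1 + (1/2:ℝ) • (Y s).2 with hrqdef
      set L : ((Fin n → ℝ) × (Fin n → ℝ)) →L[ℝ] ℝ := fderiv ℝ H (lmap A (X s) (Y s)) with hLdef
      -- combine the two L-terms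
      have hvec : ((-((1/2:ℝ) • (Pi.single j 1 : Fin n → ℝ)),
            fun k => -(DA F k (lq, rq) (-((1/2:ℝ) • (Pi.single j 1 : Fin n → ℝ)),
              (1/2:ℝ) • (Pi.single j 1 : Fin n → ℝ)))) : (Fin n → ℝ) × (Fin n → ℝ))
          + (1/2:ℝ) • (((Pi.single j 1 : Fin n → ℝ),
            fun k => -(DA F k (lq, rq) ((Pi.single j 1 : Fin n → ℝ), (Pi.single j 1 : Fin n → ℝ)))) :
              (Fin n → ℝ) × (Fin n → ℝ))
          = (((0 : Fin n → ℝ),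
            fun k => -(DA F k (lq, rq) ((0 : Fin n → ℝ), (Pi.single j 1 : Fin n → ℝ)))) :
              (Fin n → ℝ) × (Fin n → ℝ)) := by
        refine Prod.ext ?_ ?_
        · funext i
          simp only [Prod.fst_add, Prod.smul_fst, Pi.add_apply, Pi.neg_apply, Pi.smul_apply,
            Pi.zero_apply, smul_eq_mul]
          ring
        · funext k
          simp only [Prod.snd_add, Prod.smul_snd, Pi.add_apply, Pi.neg_apply, Pi.smul_apply,
            smul_eq_mul]
          have hdir : (((0 : Fin n → ℝ), (Pi.single j 1 : Fin n → ℝ)) : (Fin n → ℝ) × (Fin n → ℝ))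
              = ((-((1/2:ℝ) • (Pi.single j 1 : Fin n → ℝ)), (1/2:ℝ) • (Pi.single j 1 : Fin n → ℝ)) :
                  (Fin n → ℝ) × (Fin n → ℝ))
                + (1/2:ℝ) • (((Pi.single j 1 : Fin n → ℝ), (Pi.single j 1 : Fin n → ℝ)) :
                  (Fin n → ℝ) × (Fin n → ℝ)) := by
            refine Prod.ext ?_ ?_
            · funext i
              simp only [Prod.fst_add, Prod.smul_fst, Pi.add_apply, Pi.neg_apply, Pi.smul_apply,
                Pi.zero_apply, smul_eq_mul]
              ring
            · funext i
              simp only [Prod.snd_add, Prod.smul_snd, Pi.add_apply, Pi.smul_apply, smul_eq_mul]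
              ring
          rw [hdir, map_add, ContinuousLinearMap.map_smul, smul_eq_mul]
          ring
      have hLcomb : L (-((1/2:ℝ) • (Pi.single j 1 : Fin n → ℝ)),
            fun k => -(DA F k (lq, rq) (-((1/2:ℝ) • (Pi.single j 1 : Fin n → ℝ)),
              (1/2:ℝ) • (Pi.single j 1 : Fin n → ℝ))))
          + (1/2) * L ((Pi.single j 1 : Fin n → ℝ),
            fun k => -(DA F k (lq, rq) ((Pi.single j 1 : Fin n → ℝ), (Pi.single j 1 : Fin n → ℝ))))
          = L ((0 : Fin n → ℝ),
            fun k => -(DA F k (lq, rq) ((0 : Fin n → ℝ), (Pi.single j 1 : Fin n → ℝ)))) := by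
        rw [← hvec, map_add, ContinuousLinearMap.map_smul, smul_eq_mul]
      have hexp1 : L ((0 : Fin n → ℝ),
            fun k => -(DA F k (lq, rq) ((0 : Fin n → ℝ), (Pi.single j 1 : Fin n → ℝ))))
          = ∑ k, (-(DA F k (lq, rq) ((0 : Fin n → ℝ), (Pi.single j 1 : Fin n → ℝ))))
              * L ((0 : Fin n → ℝ), (Pi.single k 1 : Fin n → ℝ)) :=
        clm_pi_expand2 L _
      have hexp2 : DA F j (rq, lq) ((0 : Fin n → ℝ),
            fun k => L ((0 : Fin n → ℝ), (Pi.single k 1 : Fin n → ℝ)))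
          = ∑ k, L ((0 : Fin n → ℝ), (Pi.single k 1 : Fin n → ℝ))
              * DA F j (rq, lq) ((0 : Fin n → ℝ), (Pi.single k 1 : Fin n → ℝ)) :=
        clm_pi_expand2 _ _
      have hfinal : ∀ k : Fin n,
          (-(DA F k (lq, rq) ((0 : Fin n → ℝ), (Pi.single j 1 : Fin n → ℝ))))
              * L ((0 : Fin n → ℝ), (Pi.single k 1 : Fin n → ℝ))
            - L ((0 : Fin n → ℝ), (Pi.single k 1 : Fin n → ℝ))
              * DA F j (rq, lq) ((0 : Fin n → ℝ), (Pi.single k 1 : Fin n → ℝ)) = 0 := by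
        intro k
        have hk := key_DA F hF hanti hclosed k j lq rq
        linear_combination (-(L ((0 : Fin n → ℝ), (Pi.single k 1 : Fin n → ℝ)))) * hk
      calc (0:ℝ) = ∑ k : Fin n,
            ((-(DA F k (lq, rq) ((0 : Fin n → ℝ), (Pi.single j 1 : Fin n → ℝ))))
              * L ((0 : Fin n → ℝ), (Pi.single k 1 : Fin n → ℝ))
            - L ((0 : Fin n → ℝ), (Pi.single k 1 : Fin n → ℝ))
              * DA F j (rq, lq) ((0 : Fin n → ℝ), (Pi.single k 1 : Fin n → ℝ))) := by
            rw [Finset.sum_congr rfl (fun k _ => hfinal k)]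
            simp
        _ = _ := by
            rw [Finset.sum_sub_distrib, ← hexp1, ← hexp2, ← hLcomb]
            ring
    have hc := eq_init_of_hasDerivAt_zero hder t
    rw [hc, hX0, hY0]
    simp
  -- Conclusion
  intro t
  refine Prod.ext ?_ ?_
  · show (X t).1 + (1/2:ℝ) • (Y t).2 = x0.1
    exact hrq t
  · show (fun j => (X t).2 j - (1/2) * (Y t).1 j
        - A j ((X t).1 + (1/2:ℝ) • (Y t).2) ((X t).1 - (1/2:ℝ) • (Y t).2)) = x0.2
    funext j
    rw [hrq t, hw j t, Aqq F A hA j x0.1, sub_zero]
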